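/- Let $L \geq 2$ and let $C_L$ be $1/2$ times the Laplacian of the cycle graph on $L$ vertices. Let $M$ be $C_L$ plus $1/2$ added to two cyclically consecutive diagonal entries (say entries $L-1$ and $0$). Then the smallest eigenvalue of $M$ is exactly $1 - \cos(\pi/(L+1))$. -/

import Mathlib

/-!
`M` has nonpositive off-diagonal entries, and `w j = sin ((j + 1) θ)` with `θ = π / (L + 1)` is a
positive eigenvector of it with eigenvalue `1 - cos θ`: in the interior this is the three-term
identity `sin ((k + 1) θ) + sin ((k - 1) θ) = 2 cos θ sin (k θ)`, and at the two perturbed ends the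
extra `1/2` on the diagonal cancels the wrap-around neighbour, because `sin (L θ) = sin θ` while
`sin 0 = sin ((L + 1) θ) = 0`. For such a matrix a positive eigenvector carries the least real
eigenvalue: scale `w` to the smallest multiple `t w` lying above a given eigenvector `v`, and
read the eigen-equations off at an index where the two touch.
-/

open Matrix

/-- Half the Laplacian of the cycle graph on `L` vertices. -/
noncomputable def cycleMat (L : ℕ) : Matrix (Fin L) (Fin L) ℝ :=
  Matrix.of fun i j =>
    if i = j then 1
    else (if (i.val + 1) % L = j.val then -(1/2 : ℝ) else 0) +
         (if (j.val + 1) % L = i.val then -(1/2 : ℝ) else 0)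

/-- Diagonal matrix with a single `1` at diagonal position `a`. -/
noncomputable def cornerDiag (L a : ℕ) : Matrix (Fin L) (Fin L) ℝ :=
  Matrix.of fun i j => if i = j ∧ i.val = a then 1 else 0

open Finset Real

theorem Matrix.le_of_mulVec_eq_smul_of_offDiag_nonpos {ι : Type*} [Fintype ι]
    {A : Matrix ι ι ℝ} (hA : ∀ i j, i ≠ j → A i j ≤ 0) {w : ι → ℝ} (hw : ∀ i, 0 < w i)
    {ν : ℝ} (hAw : A *ᵥ w = ν • w) {v : ι → ℝ} (hv : v ≠ 0) {μ : ℝ} (hAv : A *ᵥ v = μ • v) :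
    ν ≤ μ := by
  wlog hpos : ∃ k, 0 < v k generalizing v
  · push Not at hpos
    obtain ⟨k, hk⟩ := Function.ne_iff.mp hv
    refine this (neg_ne_zero.mpr hv) (by rw [mulVec_neg, hAv, smul_neg]) ⟨k, ?_⟩
    simpa using (hpos k).lt_of_ne hk
  obtain ⟨k, hk⟩ := hpos
  obtain ⟨i, -, hi⟩ := exists_max_image univ (fun j => v j / w j) ⟨k, mem_univ k⟩
  set t := v i / w i
  have ht : 0 < t := (div_pos hk (hw k)).trans_le (hi k (mem_univ k))
  have hu : ∀ j, 0 ≤ t * w j - v j := fun j =>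
    sub_nonneg.mpr ((div_le_iff₀ (hw j)).mp (hi j (mem_univ j)))
  have hui : t * w i - v i = 0 := by rw [div_mul_cancel₀ _ (hw i).ne', sub_self]
  have hrow_nonpos : (A *ᵥ (t • w - v)) i ≤ 0 := by
    refine sum_nonpos fun j _ => ?_
    by_cases hji : j = i
    · simp [hji, hui]
    · exact mul_nonpos_of_nonpos_of_nonneg (hA i j (Ne.symm hji)) (hu j)
  have hrow : (A *ᵥ (t • w - v)) i = t * w i * (ν - μ) := by
    rw [mulVec_sub, mulVec_smul, hAw, hAv]
    simp only [Pi.sub_apply, Pi.smul_apply, smul_eq_mul]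
    rw [← sub_eq_zero.mp hui]
    ring
  exact sub_nonpos.mp (nonpos_of_mul_nonpos_right (hrow ▸ hrow_nonpos) (mul_pos ht (hw i)))

noncomputable def perturbedCycleMat (L : ℕ) : Matrix (Fin L) (Fin L) ℝ :=
  cycleMat L + (1/2 : ℝ) • cornerDiag L (L - 1) + (1/2 : ℝ) • cornerDiag L 0

theorem perturbedCycleMat_apply_nonpos {L : ℕ} {i j : Fin L} (hij : i ≠ j) :
    perturbedCycleMat L i j ≤ 0 := by
  simp only [perturbedCycleMat, cycleMat, cornerDiag, Matrix.add_apply, Matrix.smul_apply,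
    of_apply, hij, false_and, if_false, smul_zero, add_zero]
  split_ifs <;> norm_num

theorem cornerDiag_mulVec_apply (L a : ℕ) (v : Fin L → ℝ) (i : Fin L) :
    (cornerDiag L a *ᵥ v) i = if i.val = a then v i else 0 := by
  simp [cornerDiag, mulVec, dotProduct, ite_and]

noncomputable def sineVec {L : ℕ} (θ : ℝ) (j : Fin L) : ℝ :=
  sin ((j + 1 : ℕ) * θ)

theorem sineVec_pos {L : ℕ} {θ : ℝ} (hθ : 0 < θ) (hLθ : (L + 1) * θ ≤ π) (j : Fin L) :
    0 < sineVec θ j := by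
  refine sin_pos_of_pos_of_lt_pi (by positivity) (lt_of_lt_of_le ?_ hLθ)
  gcongr
  exact_mod_cast Nat.add_lt_add_right j.isLt 1

section

variable {n : ℕ}

theorem cycleMat_apply (i j : Fin (n + 2)) :
    cycleMat (n + 2) i j =
      (if j = i then 1 else 0) - (if j = i + 1 then 1/2 else 0) -
        (if j = i - 1 then 1/2 else 0) := by
  have hsucc : (i.val + 1) % (n + 2) = j.val ↔ j = i + 1 := by
    rw [Fin.ext_iff, Fin.val_add, Fin.val_one, eq_comm]
  have hpred : (j.val + 1) % (n + 2) = i.val ↔ j = i - 1 := by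
    rw [eq_sub_iff_add_eq, Fin.ext_iff, Fin.val_add, Fin.val_one]
  simp only [cycleMat, of_apply, hsucc, hpred]
  by_cases hji : j = i
  · subst hji
    simp [eq_sub_iff_add_eq]
  · simp only [Ne.symm hji, hji, if_false]
    split_ifs <;> ring

theorem cycleMat_mulVec_apply (v : Fin (n + 2) → ℝ) (i : Fin (n + 2)) :
    (cycleMat (n + 2) *ᵥ v) i = v i - (v (i + 1) + v (i - 1)) / 2 := by
  simp only [mulVec, dotProduct, cycleMat_apply, sub_mul, ite_mul, one_mul, zero_mul,
    sum_sub_distrib, sum_ite_eq', mem_univ, if_true]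
  ring

theorem perturbedCycleMat_mulVec_apply (v : Fin (n + 2) → ℝ) (i : Fin (n + 2)) :
    (perturbedCycleMat (n + 2) *ᵥ v) i = v i - (v (i + 1) + v (i - 1)) / 2
      + (if i = Fin.last _ then v i / 2 else 0) + (if i = 0 then v i / 2 else 0) := by
  simp only [perturbedCycleMat, add_mulVec, smul_mulVec, Pi.add_apply, Pi.smul_apply,
    cycleMat_mulVec_apply, cornerDiag_mulVec_apply, Fin.ext_iff, Fin.val_last, Fin.val_zero,
    show n + 2 - 1 = n + 1 from rfl, smul_eq_mul]
  split_ifs <;> ring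

theorem perturbedCycleMat_mulVec_sineVec {θ : ℝ} (hθ : (n + 3) * θ = π) :
    perturbedCycleMat (n + 2) *ᵥ sineVec θ = (1 - cos θ) • sineVec θ := by
  set s : ℕ → ℝ := fun k => sin (k * θ)
  have hrec : ∀ k, s k + s (k + 2) = 2 * cos θ * s (k + 1) := fun k => by
    simp only [s, Nat.cast_add, Nat.cast_ofNat, Nat.cast_one]
    rw [show ((k : ℝ) + 2) * θ = (k + 1) * θ + θ by ring,
      show (k : ℝ) * θ = (k + 1) * θ - θ by ring, sin_add, sin_sub]
    ring
  have hs_zero : s 0 = 0 := by simp [s]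
  have hs_end : s (n + 3) = 0 := by simp [s, hθ]
  have hs_symm : s (n + 2) = s 1 := by
    simp only [s, Nat.cast_add, Nat.cast_ofNat, Nat.cast_one, one_mul]
    rw [← sin_pi_sub, ← hθ]
    ring_nf
  ext i
  rw [perturbedCycleMat_mulVec_apply, Pi.smul_apply, smul_eq_mul]
  change s _ - (s _ + s _) / 2 + (if _ then s _ / 2 else 0) + (if _ then s _ / 2 else 0) = _ * s _
  rcases eq_or_ne i 0 with rfl | hi0
  · simp only [zero_add, zero_sub, Fin.val_one, Fin.coe_neg_one, Fin.val_zero,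
      Fin.zero_eq_last_iff, Nat.add_eq_zero_iff, one_ne_zero, and_false, if_true, if_false]
    linear_combination (-1/2) * hs_symm - (1/2) * hrec 0 + (1/2) * hs_zero
  rcases eq_or_ne i (Fin.last _) with rfl | hil
  · simp only [Fin.last_add_one, Fin.coe_sub_one, Fin.val_last, Fin.val_zero, hi0,
      if_true, if_false, add_tsub_cancel_right]
    linear_combination (-1/2) * hrec (n + 1) + (1/2) * hs_end + (1/2) * hs_symm
  · simp only [Fin.val_add_one, Fin.coe_sub_one, hi0, hil, if_false,
      Nat.sub_add_cancel (Nat.one_le_iff_ne_zero.mpr (Fin.val_ne_zero_iff.mpr hi0))]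
    linear_combination (-1/2) * hrec i

end

/-- For `L ≥ 2`, the smallest eigenvalue of `C_L` with `1/2` added to the two cyclically
consecutive diagonal entries `L-1` and `0` is exactly `1 - cos(π/(L+1))`. -/
theorem stmt1 (L : ℕ) (hL : 2 ≤ L) :
    IsLeast {μ : ℝ | ∃ v : Fin L → ℝ, v ≠ 0 ∧
        (cycleMat L + (1/2 : ℝ) • cornerDiag L (L - 1) + (1/2 : ℝ) • cornerDiag L 0).mulVec v
          = μ • v}
      (1 - Real.cos (Real.pi / ((L : ℝ) + 1))) := by
  obtain ⟨n, rfl⟩ := Nat.exists_eq_add_of_le' hL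
  set θ := π / ((n + 2 : ℕ) + 1 : ℝ)
  have hθ : ((n + 2 : ℕ) + 1 : ℝ) * θ = π := mul_div_cancel₀ _ (by positivity)
  have hw : ∀ j, 0 < sineVec θ j := sineVec_pos (by positivity) hθ.le
  have hMw : perturbedCycleMat (n + 2) *ᵥ sineVec θ = (1 - cos θ) • sineVec θ :=
    perturbedCycleMat_mulVec_sineVec (by push_cast at hθ; linarith)
  refine ⟨⟨sineVec θ, fun h => (hw 0).ne' (congrFun h 0), hMw⟩, ?_⟩
  rintro μ ⟨v, hv, hMv⟩
  exact le_of_mulVec_eq_smul_of_offDiag_nonpos (fun _ _ => perturbedCycleMat_apply_nonpos)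
    hw hMw hv hMv
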